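/- In the semidirect product algebra A ⋊ U of dually paired Hopf algebras (with cross relation x·a = a_{(1)}⟨x_{(1)}, a_{(2)}⟩ x_{(2)}), the element E := Σ_i S^{-1}(f^i)·e_i satisfies E·a = ε(a)·E for all a ∈ A and x·E = ε(x)·E for all x ∈ U. -/

import Mathlib

open TensorProduct

/-- A pair of dually paired finite-dimensional Hopf algebras `U` (enveloping-algebra type) and
`A` (function-algebra type) over a field `k`, with a nondegenerate pairing realized by finite
dual bases `{e i} ⊂ U`, `{f i} ⊂ A`, and invertible antipodes. -/
structure PairedHopf (k U A : Type*) (ι : Type*) [Field k] [Ring U] [Ring A]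
    [HopfAlgebra k U] [HopfAlgebra k A] [Fintype ι] [DecidableEq ι] where
  pair : U →ₗ[k] A →ₗ[k] k
  pair_mul_left : ∀ (x y : U) (a : A), pair (x * y) a =
    (LinearMap.mul' k k ∘ₗ TensorProduct.map (pair x) (pair y)) (Coalgebra.comul (R := k) a)
  pair_mul_right : ∀ (x : U) (a b : A), pair x (a * b) =
    (LinearMap.mul' k k ∘ₗ TensorProduct.map (pair.flip a) (pair.flip b))
      (Coalgebra.comul (R := k) x)
  pair_antipode : ∀ (x : U) (a : A),
    pair (HopfAlgebra.antipode (R := k) x) a = pair x (HopfAlgebra.antipode (R := k) a)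
  pair_one_left : ∀ a : A, pair 1 a = Coalgebra.counit (R := k) a
  pair_one_right : ∀ x : U, pair x 1 = Coalgebra.counit (R := k) x
  SinvU : U →ₗ[k] U
  SinvA : A →ₗ[k] A
  SinvU_antipode : ∀ x : U, SinvU (HopfAlgebra.antipode (R := k) x) = x
  antipode_SinvU : ∀ x : U, HopfAlgebra.antipode (R := k) (SinvU x) = x
  SinvA_antipode : ∀ a : A, SinvA (HopfAlgebra.antipode (R := k) a) = a
  antipode_SinvA : ∀ a : A, HopfAlgebra.antipode (R := k) (SinvA a) = a
  e : ι → U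
  f : ι → A
  pair_basis : ∀ i j, pair (e i) (f j) = if i = j then 1 else 0
  expand_U : ∀ x : U, ∑ i, pair x (f i) • e i = x
  expand_A : ∀ a : A, ∑ i, pair (e i) a • f i = a

open TensorProduct in
/-- The right-hand side `a₍₁₎ ⟨x₍₁₎, a₍₂₎⟩ x₍₂₎` of the cross relation in the semidirect
product `A ⋊ U`, as a linear map `U ⊗ A → H` (where `ιA`, `ιU` embed `A`, `U` into `H`). -/
noncomputable def crossRHS {k U A H : Type*} [Field k] [Ring U] [Ring A] [Ring H]
    [HopfAlgebra k U] [HopfAlgebra k A] [Algebra k H]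
    (pair : U →ₗ[k] A →ₗ[k] k) (ιA : A →ₐ[k] H) (ιU : U →ₐ[k] H) :
    U ⊗[k] A →ₗ[k] H :=
  (TensorProduct.lid k H).toLinearMap
    ∘ₗ TensorProduct.map (TensorProduct.lift pair)
        (TensorProduct.lift (LinearMap.mk₂ k (fun x a => ιA a * ιU x)
          (fun x y a => by simp [mul_add])
          (fun c x a => by simp [mul_smul_comm])
          (fun x a b => by simp [add_mul])
          (fun c x a => by simp [smul_mul_assoc])))
    ∘ₗ (TensorProduct.tensorTensorTensorComm k U U A A).toLinearMap
    ∘ₗ TensorProduct.map LinearMap.id (TensorProduct.comm k A A).toLinearMap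
    ∘ₗ TensorProduct.map (Coalgebra.comul (R := k)) (Coalgebra.comul (R := k))

/-!
By the cross relation, `E a = ∑ i, S⁻¹(f i) a₍₁₎ ⟨e i₍₁₎, a₍₂₎⟩ e i₍₂₎`. Pairing against the dual
bases, the right hit action of `a₍₂₎` on `e i` moves across the canonical element `∑ i, f i ⊗ e i`
to left multiplication of `f i` by `a₍₂₎`; since `S⁻¹` is an antihomomorphism this leaves
`S⁻¹(a₍₂₎) a₍₁₎ = ε(a)` in the middle. For `x E` one first rewrites `E = ∑ i, f i S⁻¹(e i)` and
argues in the mirror image, ending with `x₍₂₎ S⁻¹(x₍₁₎) = ε(x)`.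
-/

namespace HopfAlgebra

open Coalgebra

variable {R C κ : Type*} [CommSemiring R] [Semiring C] [HopfAlgebra R C] {T : C →ₗ[R] C}

theorem inv_antipode_mul_antidistrib (hST : ∀ a, antipode R (T a) = a)
    (hTS : ∀ a, T (antipode R a) = a) (a b : C) : T (a * b) = T b * T a := by
  apply Function.LeftInverse.injective hTS
  rw [antipode_mul_antidistrib, hST, hST, hST]

theorem sum_inv_antipode_right_mul_left_eq_smul (hST : ∀ a, antipode R (T a) = a)
    (hTS : ∀ a, T (antipode R a) = a) {a : C} (repr : Repr R a κ) :
    ∑ i ∈ repr.index, T (repr.right i) * repr.left i = counit (R := R) a • 1 := by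
  apply Function.LeftInverse.injective hTS
  simp only [map_sum, antipode_mul_antidistrib, hST, map_smul, antipode_one]
  exact sum_antipode_mul_eq_smul repr

theorem sum_right_mul_inv_antipode_left_eq_smul (hST : ∀ a, antipode R (T a) = a)
    (hTS : ∀ a, T (antipode R a) = a) {a : C} (repr : Repr R a κ) :
    ∑ i ∈ repr.index, repr.right i * T (repr.left i) = counit (R := R) a • 1 := by
  apply Function.LeftInverse.injective hTS
  simp only [map_sum, antipode_mul_antidistrib, hST, map_smul, antipode_one]
  exact sum_mul_antipode_eq_smul repr

end HopfAlgebra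

namespace PairedHopf

open Coalgebra HopfAlgebra

variable {k U A ι : Type*} [Field k] [Ring U] [Ring A]
    [HopfAlgebra k U] [HopfAlgebra k A] [Fintype ι] [DecidableEq ι]
    (P : PairedHopf k U A ι)

theorem sum_pair_smul_e {V : Type*} [AddCommMonoid V] [Module k V] (g : U →ₗ[k] V) (x : U) :
    ∑ i, P.pair x (P.f i) • g (P.e i) = g x := by
  conv_rhs => rw [← P.expand_U x]
  simp only [map_sum, map_smul]

theorem sum_pair_smul_f {V : Type*} [AddCommMonoid V] [Module k V] (g : A →ₗ[k] V) (a : A) :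
    ∑ i, P.pair (P.e i) a • g (P.f i) = g a := by
  conv_rhs => rw [← P.expand_A a]
  simp only [map_sum, map_smul]

/-- A map on `U` can be moved across the canonical element `∑ i, f i ⊗ e i` as its adjoint. -/
theorem sum_apply_map_e_eq_sum_apply_adjoint_f {M : Type*} [AddCommMonoid M] [Module k M]
    (β : A →ₗ[k] U →ₗ[k] M) {T : U →ₗ[k] U} {T' : A →ₗ[k] A}
    (hT : ∀ x a, P.pair (T x) a = P.pair x (T' a)) :
    ∑ i, β (P.f i) (T (P.e i)) = ∑ i, β (T' (P.f i)) (P.e i) := by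
  calc ∑ i, β (P.f i) (T (P.e i))
      = ∑ i, ∑ j, P.pair (T (P.e i)) (P.f j) • β (P.f i) (P.e j) := by
        simp only [P.sum_pair_smul_e (β _)]
    _ = ∑ j, ∑ i, P.pair (P.e i) (T' (P.f j)) • β (P.f i) (P.e j) := by
        rw [Finset.sum_comm]; simp only [hT]
    _ = ∑ j, β (T' (P.f j)) (P.e j) :=
        Finset.sum_congr rfl fun j _ => P.sum_pair_smul_f (β.flip (P.e j)) _

theorem pair_SinvU (x : U) (a : A) : P.pair (P.SinvU x) a = P.pair x (P.SinvA a) := by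
  simpa only [P.antipode_SinvU, P.antipode_SinvA] using
    (P.pair_antipode (P.SinvU x) (P.SinvA a)).symm

theorem SinvA_mul (a b : A) : P.SinvA (a * b) = P.SinvA b * P.SinvA a :=
  inv_antipode_mul_antidistrib P.antipode_SinvA P.SinvA_antipode a b

theorem SinvU_mul (x y : U) : P.SinvU (x * y) = P.SinvU y * P.SinvU x :=
  inv_antipode_mul_antidistrib P.antipode_SinvU P.SinvU_antipode x y

/-- The right hit action `x ↼ c = ⟨x₍₁₎, c⟩ x₍₂₎` of `A` on `U`. -/
noncomputable def rightHit (c : A) : U →ₗ[k] U :=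
  TensorProduct.lid k U ∘ₗ (P.pair.flip c).rTensor U ∘ₗ comul

/-- The left hit action `y ⇀ a = a₍₁₎ ⟨y, a₍₂₎⟩` of `U` on `A`. -/
noncomputable def leftHit (y : U) : A →ₗ[k] A :=
  TensorProduct.rid k A ∘ₗ (P.pair y).lTensor A ∘ₗ comul

theorem rightHit_eq_sum {κ : Type*} (c : A) {x : U} (repr : Repr k x κ) :
    P.rightHit c x = ∑ i ∈ repr.index, P.pair (repr.left i) c • repr.right i := by
  simp [rightHit, ← repr.eq, map_sum]

theorem leftHit_eq_sum {κ : Type*} (y : U) {a : A} (repr : Repr k a κ) :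
    P.leftHit y a = ∑ i ∈ repr.index, P.pair y (repr.right i) • repr.left i := by
  simp [leftHit, ← repr.eq, map_sum]

theorem pair_rightHit (c : A) (x : U) (b : A) :
    P.pair (P.rightHit c x) b = P.pair x (c * b) := by
  rw [P.rightHit_eq_sum c (ℛ k x), P.pair_mul_right, ← (ℛ k x).eq]
  simp [map_sum]

theorem pair_leftHit (y z : U) (a : A) :
    P.pair z (P.leftHit y a) = P.pair (z * y) a := by
  rw [P.leftHit_eq_sum y (ℛ k a), P.pair_mul_left, ← (ℛ k a).eq]
  simp [map_sum, mul_comm]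

end PairedHopf

open Coalgebra in
theorem crossRHS_tmul_eq_sum {k U A H κ κ' : Type*} [Field k] [Ring U] [Ring A] [Ring H]
    [HopfAlgebra k U] [HopfAlgebra k A] [Algebra k H]
    (pair : U →ₗ[k] A →ₗ[k] k) (ιA : A →ₐ[k] H) (ιU : U →ₐ[k] H)
    {x : U} {a : A} (rx : Repr k x κ) (ra : Repr k a κ') :
    crossRHS pair ιA ιU (x ⊗ₜ[k] a) = ∑ j ∈ ra.index, ∑ i ∈ rx.index,
      pair (rx.left i) (ra.right j) • (ιA (ra.left j) * ιU (rx.right i)) := by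
  simp [crossRHS, ← rx.eq, ← ra.eq, map_sum, sum_tmul, tmul_sum]

namespace PairedHopf

open Coalgebra HopfAlgebra

variable {k U A H ι : Type*} [Field k] [Ring U] [Ring A] [Ring H]
    [HopfAlgebra k U] [HopfAlgebra k A] [Algebra k H] [Fintype ι] [DecidableEq ι]
    (P : PairedHopf k U A ι) (ιA : A →ₐ[k] H) (ιU : U →ₐ[k] H)

theorem crossRHS_tmul_eq_sum_rightHit {κ : Type*} (x : U) {a : A} (ra : Repr k a κ) :
    crossRHS P.pair ιA ιU (x ⊗ₜ[k] a) =
      ∑ j ∈ ra.index, ιA (ra.left j) * ιU (P.rightHit (ra.right j) x) := by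
  simp only [crossRHS_tmul_eq_sum P.pair ιA ιU (ℛ k x) ra, P.rightHit_eq_sum _ (ℛ k x),
    map_sum, map_smul, Finset.mul_sum, mul_smul_comm]

theorem crossRHS_tmul_eq_sum_leftHit {κ : Type*} {x : U} (rx : Repr k x κ) (a : A) :
    crossRHS P.pair ιA ιU (x ⊗ₜ[k] a) =
      ∑ i ∈ rx.index, ιA (P.leftHit (rx.left i) a) * ιU (rx.right i) := by
  rw [crossRHS_tmul_eq_sum P.pair ιA ιU rx (ℛ k a), Finset.sum_comm]
  simp only [P.leftHit_eq_sum _ (ℛ k a), map_sum, map_smul, Finset.sum_mul, smul_mul_assoc]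

noncomputable def vacuum : H := ∑ i, ιA (P.SinvA (P.f i)) * ιU (P.e i)

theorem sum_f_mul_SinvU_e : ∑ i, ιA (P.f i) * ιU (P.SinvU (P.e i)) = P.vacuum ιA ιU :=
  P.sum_apply_map_e_eq_sum_apply_adjoint_f
    ((LinearMap.mul k H).compl₁₂ ιA.toLinearMap ιU.toLinearMap) P.pair_SinvU

variable {P ιA ιU}

theorem vacuum_mul
    (hcross : ∀ (x : U) (a : A), ιU x * ιA a = crossRHS P.pair ιA ιU (x ⊗ₜ[k] a)) (a : A) :
    P.vacuum ιA ιU * ιA a = counit (R := k) a • P.vacuum ιA ιU := by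
  let ra := ℛ k a
  calc P.vacuum ιA ιU * ιA a
      = ∑ j ∈ ra.index, ∑ i,
          ιA (P.SinvA (P.f i) * ra.left j) * ιU (P.rightHit (ra.right j) (P.e i)) := by
        simp only [vacuum, Finset.sum_mul, mul_assoc, hcross,
          P.crossRHS_tmul_eq_sum_rightHit ιA ιU _ ra, Finset.mul_sum, map_mul]
        exact Finset.sum_comm
    _ = ∑ j ∈ ra.index, ∑ i, ιA (P.SinvA (ra.right j * P.f i) * ra.left j) * ιU (P.e i) :=
        Finset.sum_congr rfl fun j _ => P.sum_apply_map_e_eq_sum_apply_adjoint_f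
          ((LinearMap.mul k H).compl₁₂
            (ιA.toLinearMap ∘ₗ LinearMap.mulRight k (ra.left j) ∘ₗ P.SinvA) ιU.toLinearMap)
          (T' := LinearMap.mulLeft k (ra.right j)) (P.pair_rightHit _)
    _ = ∑ i, ιA (P.SinvA (P.f i) * ∑ j ∈ ra.index, P.SinvA (ra.right j) * ra.left j) *
          ιU (P.e i) := by
        rw [Finset.sum_comm]
        simp only [P.SinvA_mul, Finset.mul_sum, map_sum, Finset.sum_mul, mul_assoc]
    _ = counit (R := k) a • P.vacuum ιA ιU := by
        rw [sum_inv_antipode_right_mul_left_eq_smul P.antipode_SinvA P.SinvA_antipode]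
        simp [vacuum, Finset.smul_sum]

theorem mul_vacuum
    (hcross : ∀ (x : U) (a : A), ιU x * ιA a = crossRHS P.pair ιA ιU (x ⊗ₜ[k] a)) (x : U) :
    ιU x * P.vacuum ιA ιU = counit (R := k) x • P.vacuum ιA ιU := by
  let rx := ℛ k x
  calc ιU x * P.vacuum ιA ιU
      = ∑ i ∈ rx.index, ∑ m,
          ιA (P.leftHit (rx.left i) (P.f m)) * ιU (rx.right i * P.SinvU (P.e m)) := by
        simp only [← P.sum_f_mul_SinvU_e, Finset.mul_sum, ← mul_assoc, hcross,
          P.crossRHS_tmul_eq_sum_leftHit ιA ιU rx, Finset.sum_mul, map_mul]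
        exact Finset.sum_comm
    _ = ∑ i ∈ rx.index, ∑ m, ιA (P.f m) * ιU (rx.right i * P.SinvU (P.e m * rx.left i)) :=
        Finset.sum_congr rfl fun i _ => (P.sum_apply_map_e_eq_sum_apply_adjoint_f
          ((LinearMap.mul k H).compl₁₂ ιA.toLinearMap
            (ιU.toLinearMap ∘ₗ LinearMap.mulLeft k (rx.right i) ∘ₗ P.SinvU))
          (T := LinearMap.mulRight k (rx.left i)) fun z b => (P.pair_leftHit _ z b).symm).symm
    _ = ∑ m, ιA (P.f m) *
          ιU ((∑ i ∈ rx.index, rx.right i * P.SinvU (rx.left i)) * P.SinvU (P.e m)) := by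
        rw [Finset.sum_comm]
        simp only [P.SinvU_mul, Finset.sum_mul, map_sum, Finset.mul_sum, mul_assoc]
    _ = counit (R := k) x • P.vacuum ιA ιU := by
        rw [sum_right_mul_inv_antipode_left_eq_smul P.antipode_SinvU P.SinvU_antipode,
          ← P.sum_f_mul_SinvU_e]
        simp [Finset.smul_sum]

end PairedHopf

open Coalgebra HopfAlgebra in
/-- In the semidirect product `A ⋊ U` (here: an algebra `H` containing `A`, `U` via algebra
maps subject to the cross relation `x a = a₍₁₎ ⟨x₍₁₎, a₍₂₎⟩ x₍₂₎`), the vacuum projector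
`E = ∑ i, S⁻¹(f i) · e i` satisfies `E a = ε(a) E` for all `a ∈ A` and `x E = ε(x) E` for
all `x ∈ U`. -/
theorem vacuum_projector_E
    {k U A H ι : Type*} [Field k] [Ring U] [Ring A] [Ring H]
    [HopfAlgebra k U] [HopfAlgebra k A] [Algebra k H] [Fintype ι] [DecidableEq ι]
    (P : PairedHopf k U A ι) (ιA : A →ₐ[k] H) (ιU : U →ₐ[k] H)
    (hcross : ∀ (x : U) (a : A),
      ιU x * ιA a = crossRHS P.pair ιA ιU (x ⊗ₜ[k] a)) :
    (∀ a : A, (∑ i, ιA (P.SinvA (P.f i)) * ιU (P.e i)) * ιA a =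
        counit (R := k) a • ∑ i, ιA (P.SinvA (P.f i)) * ιU (P.e i)) ∧
    (∀ x : U, ιU x * (∑ i, ιA (P.SinvA (P.f i)) * ιU (P.e i)) =
        counit (R := k) x • ∑ i, ιA (P.SinvA (P.f i)) * ιU (P.e i)) :=
  ⟨PairedHopf.vacuum_mul hcross, PairedHopf.mul_vacuum hcross⟩
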